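/- Define the Gaussian activation σ(x, w) = 2^{d/2} e^{‖x‖²/4} e^{−‖x − w‖²} for x, w ∈ ℝ^d. Then for all θ, w ∈ ℝ^d, ∫_{ℝ^d} σ(x, θ) σ(x, w) dμ_d(x) = e^{−‖θ − w‖²/2}. In particular, the Gaussian potential Φ(θ, w) = e^{−‖θ−w‖²/2} is realizable under standard Gaussian inputs. -/

import Mathlib

open MeasureTheory ProbabilityTheory

/-- The standard Gaussian measure `N(0, I_d)` on `ℝ^d`. -/
noncomputable def stdGaussian (d : ℕ) : Measure (EuclideanSpace ℝ (Fin d)) :=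
  (Measure.pi fun _ : Fin d => gaussianReal 0 1).map (WithLp.toLp 2)

/-!
The product `σ(x,θ) σ(x,w)` factorises over coordinates, and so does `μ_d`, so the integral is a
product of one-dimensional integrals. In each of them the weight `e^{t²/2}` cancels the Gaussian
density, and completing the square gives
`-(t-a)² - (t-b)² = -(a-b)²/2 - 2(t - (a+b)/2)²`, leaving `e^{-(a-b)²/2}` times a Gaussian
integral equal to `√(2π)/2`.
-/

open Real

lemma integral_stdGaussian_prod {d : ℕ} (f : Fin d → ℝ → ℝ) :
    ∫ x, ∏ i, f i (x i) ∂(stdGaussian d) = ∏ i, ∫ t, f i t ∂(gaussianReal 0 1) :=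
  (integral_map_equiv (MeasurableEquiv.toLp 2 (Fin d → ℝ)) _).trans
    (integral_fintype_prod_eq_prod f)

lemma integral_gaussianReal_two_mul_exp (a b : ℝ) :
    ∫ t, 2 * exp (t ^ 2 / 2 - (t - a) ^ 2 - (t - b) ^ 2) ∂(gaussianReal 0 1)
      = exp (-(a - b) ^ 2 / 2) := by
  have h_integrand : ∀ t : ℝ,
      gaussianPDFReal 0 1 t • (2 * exp (t ^ 2 / 2 - (t - a) ^ 2 - (t - b) ^ 2))
        = ((√(2 * π))⁻¹ * 2 * exp (-(a - b) ^ 2 / 2)) * exp (-2 * (t - (a + b) / 2) ^ 2) := by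
    intro t
    have h_square : -t ^ 2 / 2 + (t ^ 2 / 2 - (t - a) ^ 2 - (t - b) ^ 2)
        = -(a - b) ^ 2 / 2 + -2 * (t - (a + b) / 2) ^ 2 := by ring
    simp only [gaussianPDFReal, NNReal.coe_one, mul_one, sub_zero, smul_eq_mul]
    calc _ = (√(2 * π))⁻¹ * 2 * exp (-t ^ 2 / 2 + (t ^ 2 / 2 - (t - a) ^ 2 - (t - b) ^ 2)) := by
          rw [exp_add]; ring
      _ = _ := by rw [h_square, exp_add]; ring
  have h_const : (√(2 * π))⁻¹ * 2 * √(π / 2) = 1 := by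
    rw [sqrt_div pi_pos.le, sqrt_mul zero_le_two]
    have h_sqrt_two : √2 * √2 = 2 := mul_self_sqrt zero_le_two
    field_simp
    linarith
  rw [integral_gaussianReal_eq_integral_smul one_ne_zero]
  simp_rw [h_integrand]
  rw [integral_const_mul, integral_sub_right_eq_self (fun u ↦ exp (-2 * u ^ 2)),
    integral_gaussian 2]
  linear_combination exp (-(a - b) ^ 2 / 2) * h_const

lemma gaussian_activation_mul_eq_prod {ι : Type*} [Fintype ι] (x θ w : EuclideanSpace ℝ ι) :
    (2 ^ ((Fintype.card ι : ℝ) / 2) * exp (‖x‖ ^ 2 / 4) * exp (-‖x - θ‖ ^ 2))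
        * (2 ^ ((Fintype.card ι : ℝ) / 2) * exp (‖x‖ ^ 2 / 4) * exp (-‖x - w‖ ^ 2))
      = ∏ i, 2 * exp ((x i) ^ 2 / 2 - (x i - θ i) ^ 2 - (x i - w i) ^ 2) := by
  have h_pow : (2 : ℝ) ^ ((Fintype.card ι : ℝ) / 2) * 2 ^ ((Fintype.card ι : ℝ) / 2)
      = 2 ^ Fintype.card ι := by
    rw [← rpow_add two_pos, add_halves, rpow_natCast]
  calc _ = (2 ^ ((Fintype.card ι : ℝ) / 2) * 2 ^ ((Fintype.card ι : ℝ) / 2))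
          * exp (‖x‖ ^ 2 / 2 - ‖x - θ‖ ^ 2 - ‖x - w‖ ^ 2) := by
        rw [show ‖x‖ ^ 2 / 2 - ‖x - θ‖ ^ 2 - ‖x - w‖ ^ 2
            = ‖x‖ ^ 2 / 4 + -‖x - θ‖ ^ 2 + (‖x‖ ^ 2 / 4 + -‖x - w‖ ^ 2) by ring,
          exp_add, exp_add, exp_add]
        ring
    _ = _ := by
        rw [h_pow, Finset.prod_mul_distrib, Finset.prod_const, Finset.card_univ, ← exp_sum]
        simp only [EuclideanSpace.real_norm_sq_eq, PiLp.sub_apply, Finset.sum_sub_distrib,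
          Finset.sum_div]

/-- the Gaussian activation `σ(x,w) = 2^{d/2} e^{‖x‖²/4} e^{-‖x-w‖²}`
realizes the Gaussian potential `Φ(θ,w) = e^{-‖θ-w‖²/2}` under standard Gaussian
inputs: `∫ σ(x,θ)σ(x,w) dμ_d(x) = e^{-‖θ-w‖²/2}` for all `θ, w`. -/
theorem stmt6 {d : ℕ}
    (σ : EuclideanSpace ℝ (Fin d) → EuclideanSpace ℝ (Fin d) → ℝ)
    (hσ : ∀ x w, σ x w
      = 2 ^ ((d : ℝ) / 2) * Real.exp (‖x‖ ^ 2 / 4) * Real.exp (-‖x - w‖ ^ 2)) :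
    ∀ θ w : EuclideanSpace ℝ (Fin d),
      ∫ x, σ x θ * σ x w ∂(stdGaussian d) = Real.exp (-‖θ - w‖ ^ 2 / 2) := by
  intro θ w
  have h_integrand (x : EuclideanSpace ℝ (Fin d)) :
      σ x θ * σ x w = ∏ i, 2 * exp ((x i) ^ 2 / 2 - (x i - θ i) ^ 2 - (x i - w i) ^ 2) := by
    simpa only [hσ, Fintype.card_fin] using gaussian_activation_mul_eq_prod x θ w
  simp_rw [h_integrand]
  rw [integral_stdGaussian_prod fun i t ↦ 2 * exp (t ^ 2 / 2 - (t - θ i) ^ 2 - (t - w i) ^ 2)]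
  simp_rw [integral_gaussianReal_two_mul_exp, ← exp_sum, EuclideanSpace.real_norm_sq_eq,
    PiLp.sub_apply, neg_div, Finset.sum_neg_distrib, Finset.sum_div]
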